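/- The Baumslag group B = ⟨a, b ∣ a = [a, a^b]⟩ is not residually finite: the image of a in every finite quotient of B is trivial, while a itself is nontrivial in B. -/

import Mathlib

/-!
If `φ : B →* Q` with `Q` finite, put `x = φ a` and `c = x^(φ b)`. The relation says
`x^c = x²`, hence `x^(cᵏ) = x^(2ᵏ)`; since `c` is conjugate to `x`, `c^n = 1` for `n = ord x`,
so `x^(2ⁿ) = x`, i.e. `n ∣ 2ⁿ - 1`, and this forces `n = 1`: the smallest prime `p ∣ n` would have
`2` of order dividing `gcd(n, p - 1) = 1` modulo `p`.

For `a ≠ 1`, realise `BS(1,2) = ⟨x, t ∣ x^t = x²⟩` by the affine maps `q ↦ q + 1` and `q ↦ q / 2`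
of `ℚ`. Both have infinite order, so the HNN extension identifying `⟨x⟩` with `⟨t⟩` contains `G`
and makes `t` a conjugate of `x`; sending `a ↦ x`, `b ↦` the conjugator gives a map from `B`
under which `a` stays nontrivial.
-/

namespace Stmt14

def a : FreeGroup (Fin 2) := FreeGroup.of 0
def b : FreeGroup (Fin 2) := FreeGroup.of 1

/-- The relator `a⁻¹ [a, a^b]` of the Baumslag group, where `a^b = b⁻¹ a b`
and `[x,y] = x⁻¹y⁻¹xy`. -/
def rel : FreeGroup (Fin 2) :=
  a⁻¹ * (a⁻¹ * (b⁻¹ * a * b)⁻¹ * a * (b⁻¹ * a * b))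

/-- The Baumslag group `B = ⟨a, b ∣ a = [a, a^b]⟩`. -/
abbrev B := PresentedGroup ({rel} : Set (FreeGroup (Fin 2)))

def A : B := PresentedGroup.of 0

end Stmt14

theorem Nat.eq_one_of_dvd_two_pow_sub_one {n : ℕ} (hn : n ≠ 0) (h : n ∣ 2 ^ n - 1) : n = 1 := by
  by_contra hn1
  set p := n.minFac
  have hp : p.Prime := Nat.minFac_prime hn1
  have := Fact.mk hp
  have h2n : (2 : ZMod p) ^ n = 1 := by
    have : ((2 ^ n - 1 : ℕ) : ZMod p) = 0 :=
      (ZMod.natCast_eq_zero_iff _ p).2 ((Nat.minFac_dvd n).trans h)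
    rwa [Nat.cast_sub Nat.one_le_two_pow, Nat.cast_pow, Nat.cast_ofNat, Nat.cast_one,
      sub_eq_zero] at this
  have h2 : (2 : ZMod p) ≠ 0 := fun h0 => by simp [h0, zero_pow hn] at h2n
  have hcop : n.Coprime (p - 1) :=
    Nat.coprime_of_lt_minFac (Nat.sub_ne_zero_of_lt hp.one_lt) (Nat.sub_lt hp.pos one_pos)
  have : (2 : ZMod p) = 1 :=
    (pow_eq_one_iff_of_coprime hcop).1 ⟨h2n, ZMod.pow_card_sub_one_eq_one h2⟩
  rw [← one_add_one_eq_two, add_eq_right] at this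
  exact one_ne_zero this

section

variable {G : Type*} [Group G] {x c : G}

theorem conj_pow_eq_pow_two_pow (h : c⁻¹ * x * c = x ^ 2) (k : ℕ) :
    (c ^ k)⁻¹ * x * c ^ k = x ^ 2 ^ k := by
  induction k with
  | zero => simp
  | succ k ih =>
    calc (c ^ (k + 1))⁻¹ * x * c ^ (k + 1) = (c ^ k)⁻¹ * (c⁻¹ * x * c) * c ^ k := by
          rw [pow_succ']; group
      _ = ((c ^ k)⁻¹ * x * c ^ k) ^ 2 := by rw [h]; simp only [pow_two]; group
      _ = x ^ 2 ^ (k + 1) := by rw [ih, ← pow_mul, pow_succ]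

theorem eq_one_of_conj_eq_sq (hx : IsOfFinOrder x) (hc : orderOf c ∣ orderOf x)
    (h : c⁻¹ * x * c = x ^ 2) : x = 1 := by
  have hfix : x ^ 2 ^ orderOf x = x ^ 1 := by
    rw [← conj_pow_eq_pow_two_pow h, orderOf_dvd_iff_pow_eq_one.1 hc]; simp
  have hdvd : orderOf x ∣ 2 ^ orderOf x - 1 :=
    (Nat.modEq_iff_dvd' Nat.one_le_two_pow).1 (pow_eq_pow_iff_modEq.1 hfix).symm
  exact orderOf_eq_one_iff.1 (Nat.eq_one_of_dvd_two_pow_sub_one hx.orderOf_pos.ne' hdvd)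

theorem inv_mul_inv_mul_conj_eq_one_iff (x c : G) :
    x⁻¹ * (x⁻¹ * c⁻¹ * x * c) = 1 ↔ c⁻¹ * x * c = x ^ 2 := by
  rw [inv_mul_eq_one, eq_comm, pow_two, mul_assoc, mul_assoc, inv_mul_eq_iff_eq_mul, ← mul_assoc]

end

universe u in
theorem exists_injective_monoidHom_conj_eq {G : Type u} [Group G] {x c : G}
    (hx : ¬IsOfFinOrder x) (hc : ¬IsOfFinOrder c) :
    ∃ (H : Type u) (_ : Group H) (f : G →* H) (y : H),
      Function.Injective f ∧ y⁻¹ * f x * y = f c := by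
  have hinj {g : G} (hg : ¬IsOfFinOrder g) : Function.Injective (zpowersHom G g) :=
    (injective_zpow_iff_not_isOfFinOrder.2 hg).comp Multiplicative.toAdd.injective
  let φ := (MonoidHom.ofInjective (hinj hx)).symm.trans (MonoidHom.ofInjective (hinj hc))
  let x' := MonoidHom.ofInjective (hinj hx) (Multiplicative.ofAdd 1)
  refine ⟨HNNExtension G _ _ φ, inferInstance, HNNExtension.of, HNNExtension.t⁻¹,
    HNNExtension.of_injective φ, ?_⟩
  have hx' : (x' : G) = x := by simp [x', MonoidHom.ofInjective_apply]
  have hφ : (φ x' : G) = c := by simp [φ, x', MonoidHom.ofInjective_apply]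
  have := HNNExtension.equiv_eq_conj (φ := φ) x'
  rw [hφ, hx'] at this
  rw [inv_inv, this]

namespace Stmt14

theorem conj_A_eq_sq :
    ((PresentedGroup.of 1)⁻¹ * A * PresentedGroup.of 1 : B)⁻¹ * A *
      ((PresentedGroup.of 1)⁻¹ * A * PresentedGroup.of 1) = A ^ 2 := by
  rw [← inv_mul_inv_mul_conj_eq_one_iff]
  exact PresentedGroup.one_of_mem rfl

theorem exists_monoidHom_A_eq {H : Type*} [Group H] {x y : H}
    (h : (y⁻¹ * x * y)⁻¹ * x * (y⁻¹ * x * y) = x ^ 2) : ∃ f : B →* H, f A = x := by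
  refine ⟨PresentedGroup.toGroup (f := ![x, y]) ?_, PresentedGroup.toGroup.of _⟩
  rintro r rfl
  simp only [rel, a, b, map_mul, map_inv, FreeGroup.lift_apply_of, Matrix.cons_val_zero,
    Matrix.cons_val_one]
  exact (inv_mul_inv_mul_conj_eq_one_iff _ _).2 h

theorem map_A_eq_one {Q : Type*} [Group Q] [Finite Q] (φ : B →* Q) : φ A = 1 := by
  set y := φ (PresentedGroup.of 1)
  have hconj : (y⁻¹ * φ A * y)⁻¹ * φ A * (y⁻¹ * φ A * y) = φ A ^ 2 := by
    simpa only [map_mul, map_inv, map_pow] using congrArg φ conj_A_eq_sq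
  have hsemiconj : SemiconjBy y⁻¹ (φ A) (y⁻¹ * φ A * y) := by
    show y⁻¹ * φ A = y⁻¹ * φ A * y * y⁻¹
    group
  exact eq_one_of_conj_eq_sq (isOfFinOrder_of_finite _) hsemiconj.orderOf_eq.symm.dvd hconj

def x₀ : Equiv.Perm ℚ := Equiv.addRight 1

def t₀ : Equiv.Perm ℚ := Equiv.mulRight₀ 2⁻¹ (by norm_num)

theorem not_isOfFinOrder_x₀ : ¬IsOfFinOrder x₀ := by
  rw [← orderOf_eq_zero_iff, orderOf_eq_zero_iff']
  intro n hn h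
  have := congrArg (· 0) h
  simp [x₀, hn.ne'] at this

theorem not_isOfFinOrder_t₀ : ¬IsOfFinOrder t₀ := by
  rw [← orderOf_eq_zero_iff, orderOf_eq_zero_iff']
  intro n hn h
  have := congrArg (· 1) h
  simp only [t₀, Equiv.Perm.coe_pow, Equiv.mulRight₀_apply, mul_right_iterate_apply_one, inv_pow,
    Equiv.Perm.coe_one, id_eq, inv_eq_one] at this
  exact (one_lt_pow₀ (by norm_num : (1 : ℚ) < 2) hn.ne').ne' this

theorem t₀_inv_mul_x₀_mul_t₀ : t₀⁻¹ * x₀ * t₀ = x₀ ^ 2 := by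
  ext q
  simp only [t₀, x₀, Equiv.Perm.coe_mul, Equiv.Perm.coe_inv, Equiv.mulRight₀_symm_apply, inv_inv,
    Equiv.coe_addRight, Equiv.mulRight₀_apply, Function.comp_apply, pow_two]
  ring

theorem A_ne_one : A ≠ 1 := by
  obtain ⟨H, _, f, y, hf, hy⟩ :=
    exists_injective_monoidHom_conj_eq not_isOfFinOrder_x₀ not_isOfFinOrder_t₀
  obtain ⟨g, hg⟩ := exists_monoidHom_A_eq (x := f x₀) (y := y) (by
    rw [hy, ← map_inv, ← map_mul, ← map_mul, t₀_inv_mul_x₀_mul_t₀, map_pow])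
  intro hA
  have : f x₀ = f 1 := by rw [← hg, hA, map_one, map_one]
  exact not_isOfFinOrder_x₀ (hf this ▸ IsOfFinOrder.one)

/-- The Baumslag group is not residually finite: `a ≠ 1` in `B`, yet the image
of `a` in every finite quotient of `B` is trivial. -/
theorem stmt14 :
    A ≠ 1 ∧ ∀ (Q : Type) [Group Q] [Finite Q] (φ : B →* Q), φ A = 1 :=
  ⟨A_ne_one, fun _ _ _ φ => map_A_eq_one φ⟩

end Stmt14
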